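/- arXiv:cs/9906029 — 2 statements merged into one kernel-verified Lean document; each statement's English description precedes it below -/
import Mathlib

section
/- The formula (⇑A) U B is equivalent to B ∨ (⇑A ∧ ○B): at every position of every infinite state sequence, (⇑A) U B holds iff B ∨ (⇑A ∧ ○B) holds. -/
/-- Infinite state sequences. -/
abbrev StSeq (σ : Type*) := ℕ → σ
/-- LTL formulas interpreted at positions of sequences. -/
abbrev Formula (σ : Type*) := StSeq σ → ℕ → Prop

def atom {σ : Type*} (A : σ → Prop) : Formula σ := fun s i => A (s i)
def FNot {σ : Type*} (F : Formula σ) : Formula σ := fun s i => ¬ F s i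
def FAnd {σ : Type*} (F G : Formula σ) : Formula σ := fun s i => F s i ∧ G s i
def FOr {σ : Type*} (F G : Formula σ) : Formula σ := fun s i => F s i ∨ G s i
def FImp {σ : Type*} (F G : Formula σ) : Formula σ := fun s i => F s i → G s i
def Next {σ : Type*} (F : Formula σ) : Formula σ := fun s i => F s (i+1)
def Up {σ : Type*} (F : Formula σ) : Formula σ := fun s i => ¬ F s i ∧ F s (i+1)
def Down {σ : Type*} (F : Formula σ) : Formula σ := fun s i => F s i ∧ ¬ F s (i+1)
def AnyE {σ : Type*} (F : Formula σ) : Formula σ := fun s i => Up F s i ∨ Down F s i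
def Always {σ : Type*} (F : Formula σ) : Formula σ := fun s i => ∀ j, i ≤ j → F s j
def Ev {σ : Type*} (F : Formula σ) : Formula σ := fun s i => ∃ j, i ≤ j ∧ F s j
def Until {σ : Type*} (F G : Formula σ) : Formula σ :=
  fun s i => ∃ k, i ≤ k ∧ G s k ∧ ∀ j, i ≤ j → j < k → F s j
/-- Repeat state `s i` once. -/
def stut {σ : Type*} (s : StSeq σ) (i : ℕ) : StSeq σ := fun j => if j ≤ i then s j else s (j - 1)
/-- Closure under stuttering. -/
def cus {σ : Type*} (F : Formula σ) : Prop := ∀ (s : StSeq σ) (i : ℕ), F s 0 ↔ F (stut s i) 0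

theorem up_until {σ : Type*} (A B : σ → Prop) :
    ∀ (s : StSeq σ) (i : ℕ),
      Until (Up (atom A)) (atom B) s i ↔
        atom B s i ∨ (Up (atom A) s i ∧ Next (atom B) s i) := by
  intro s i
  constructor
  · rintro ⟨k, hik, hB, hUp⟩
    rcases eq_or_lt_of_le hik with rfl | hlt
    · exact Or.inl hB
    · right
      have hk : k = i + 1 := by
        by_contra h
        have h1 : i + 1 < k := lt_of_le_of_ne hlt (Ne.symm h)
        have u1 := hUp i le_rfl hlt
        have u2 := hUp (i+1) (Nat.le_succ i) h1
        exact u2.1 u1.2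
      subst hk
      exact ⟨hUp i le_rfl hlt, hB⟩
  · rintro (hB | ⟨hUp, hB⟩)
    · exact ⟨i, le_rfl, hB, fun j hj hj' => absurd hj (Nat.not_le_of_lt hj')⟩
    · refine ⟨i+1, Nat.le_succ i, hB, fun j hj hj' => ?_⟩
      have : j = i := Nat.le_antisymm (Nat.lt_succ_iff.mp hj') hj
      subst this; exact hUp
end

section
/- The global Response Chain formula □((S ∧ ○◇T) → ○◇(T ∧ ◇P)) is not closed under stuttering: there exist atomic propositions S, T, P and an infinite state sequence s such that the formula holds at position 0 of s but fails at position 0 of the sequence obtained by repeating the first state of s. (Witness: S and T true only in state 0, P always false.) -/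
theorem response_chain_not_cus :
    ∃ (σ : Type) (S T P : σ → Prop) (s : StSeq σ),
      Always (FImp (FAnd (atom S) (Next (Ev (atom T))))
                   (Next (Ev (FAnd (atom T) (Ev (atom P)))))) s 0 ∧
      ¬ Always (FImp (FAnd (atom S) (Next (Ev (atom T))))
                     (Next (Ev (FAnd (atom T) (Ev (atom P)))))) (stut s 0) 0 := by
  refine ⟨ℕ, (· = 0), (· = 0), fun _ => False, id, ?_, ?_⟩
  · intro j _ h
    simp only [FAnd, atom, Next, Ev, id] at h
    obtain ⟨hj, k, hk, hk0⟩ := h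
    omega
  · intro h
    have := h 0 le_rfl ⟨rfl, 1, le_rfl, by simp [stut, atom]⟩
    simp only [Next, Ev, FAnd, atom] at this
    obtain ⟨j, _, _, k, _, hF⟩ := this
    exact hF
end
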